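/- For every δ, ρ ∈ (0,1), setting K₁ = ρ√(δ/2), K₂ = 1/K₁ and c₀ = ρ²δ/(2e), the following holds. Let n and d be positive integers with d ≤ ρ²δn/4, let x ∈ Incomp(δ,ρ) ⊆ S^{n−1}, and let J be a random subset uniformly distributed over all d-element subsets of {1,…,n}. Then with probability greater than c₀^d (over J), both P_J x / ‖P_J x‖₂ ∈ Spread_J and ρ√d/√(2n) ≤ ‖P_J x‖₂ ≤ √d/√(δn). -/

import Mathlib

/-! Coordinates of `x` above `1/√(δn)` number at most `δn`, so by incompressibility the others
carry mass more than `ρ²`; those below `ρ/√(2n)` carry at most `ρ²/2`. Hence the set of coordinates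
`k` with `|x k| ∈ [ρ/√(2n), 1/√(δn)]` has `m > ρ²δn/2 ≥ 2d` elements, and every `d`-subset `J` of it
satisfies both conclusions, the spread constant being the ratio `K₁ = (ρ/√(2n)) / (1/√(δn))` of
the two levels. As `c₀ n < ρ²δn/4 < m + 1 - d`, there are
`binom(m, d) ≥ (m + 1 - d)^d / d! > (c₀ n)^d / d! ≥ c₀^d binom(n, d)` such `J`. -/

open Set Real

noncomputable section

/-- The set of sparse vectors: those with support of size at most `δn`. -/
def sparseVecs (n : ℕ) (δ : ℝ) : Set (EuclideanSpace ℝ (Fin n)) :=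
  {y | ({k | y k ≠ 0}.ncard : ℝ) ≤ δ * n}

/-- Incompressible unit vectors. -/
def Incomp (n : ℕ) (δ ρ : ℝ) : Set (EuclideanSpace ℝ (Fin n)) :=
  {x | ‖x‖ = 1 ∧ ¬ Metric.infDist x (sparseVecs n δ) ≤ ρ}

/-- The orthogonal projection `P_J` of `ℝ^n` onto the coordinate subspace `ℝ^J`. -/
def projCoord {n : ℕ} (J : Finset (Fin n)) (x : EuclideanSpace ℝ (Fin n)) :
    EuclideanSpace ℝ (Fin n) :=
  (WithLp.equiv 2 (Fin n → ℝ)).symm fun k => if k ∈ J then x k else 0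

/-- The set of totally spread unit vectors supported on `J`, `|J| = d`:
`Spread_J = { y ∈ S(ℝ^J) : K₁/√d ≤ |y_k| ≤ K₂/√d for all k ∈ J }`. -/
def spreadSet (n d : ℕ) (J : Finset (Fin n)) (K₁ K₂ : ℝ) : Set (EuclideanSpace ℝ (Fin n)) :=
  {y | ‖y‖ = 1 ∧ (∀ k, k ∉ J → y k = 0) ∧
    ∀ k ∈ J, K₁ / Real.sqrt d ≤ |y k| ∧ |y k| ≤ K₂ / Real.sqrt d}

open Finset

section SumSq

variable {ι : Type*} {s : Finset ι} {f : ι → ℝ} {a : ℝ}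

lemma sum_sq_le_card_mul_sq (h : ∀ k ∈ s, |f k| ≤ a) : ∑ k ∈ s, f k ^ 2 ≤ #s * a ^ 2 := by
  rw [← nsmul_eq_mul]
  refine sum_le_card_nsmul s _ _ fun k hk => ?_
  rw [← sq_abs]
  exact pow_le_pow_left₀ (abs_nonneg _) (h k hk) 2

lemma card_mul_sq_le_sum_sq (ha : 0 ≤ a) (h : ∀ k ∈ s, a ≤ |f k|) :
    #s * a ^ 2 ≤ ∑ k ∈ s, f k ^ 2 := by
  rw [← nsmul_eq_mul]
  refine card_nsmul_le_sum s _ _ fun k hk => ?_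
  rw [← sq_abs (f k)]
  exact pow_le_pow_left₀ ha (h k hk) 2

lemma card_filter_lt_abs_mul_sq_le_sum_sq [Fintype ι] (ha : 0 ≤ a) :
    #{k | a < |f k|} * a ^ 2 ≤ ∑ k, f k ^ 2 :=
  (card_mul_sq_le_sum_sq ha fun _ hk => (mem_filter.mp hk).2.le).trans
    (sum_le_sum_of_subset_of_nonneg (subset_univ _) fun _ _ _ => sq_nonneg _)

end SumSq

section Projection

variable {n : ℕ}

lemma projCoord_apply (J : Finset (Fin n)) (x : EuclideanSpace ℝ (Fin n)) (k : Fin n) :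
    projCoord J x k = if k ∈ J then x k else 0 := rfl

lemma norm_projCoord_sq (J : Finset (Fin n)) (x : EuclideanSpace ℝ (Fin n)) :
    ‖projCoord J x‖ ^ 2 = ∑ k ∈ J, x k ^ 2 := by
  simp [EuclideanSpace.real_norm_sq_eq, projCoord_apply, sum_ite_mem]

lemma sub_projCoord (J : Finset (Fin n)) (x : EuclideanSpace ℝ (Fin n)) :
    x - projCoord J x = projCoord Jᶜ x := by
  ext k
  by_cases hk : k ∈ J <;> simp [projCoord_apply, hk]

lemma projCoord_mem_sparseVecs {δ : ℝ} {J : Finset (Fin n)} (hJ : (#J : ℝ) ≤ δ * n)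
    (x : EuclideanSpace ℝ (Fin n)) : projCoord J x ∈ sparseVecs n δ := by
  have hsupp : {k | projCoord J x k ≠ 0} ⊆ ↑J := by
    intro k hk
    by_contra hkJ
    exact hk (if_neg hkJ)
  calc ({k | projCoord J x k ≠ 0}.ncard : ℝ) ≤ #J := by
        exact_mod_cast (Set.ncard_le_ncard hsupp J.finite_toSet).trans_eq (ncard_coe_finset J)
    _ ≤ δ * n := hJ

end Projection

section Incompressible

variable {n : ℕ} {δ ρ : ℝ} {x : EuclideanSpace ℝ (Fin n)}

lemma Incomp.lt_norm_sub (hx : x ∈ Incomp n δ ρ) {y : EuclideanSpace ℝ (Fin n)}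
    (hy : y ∈ sparseVecs n δ) : ρ < ‖x - y‖ := by
  rw [← dist_eq_norm]
  exact (not_le.mp hx.2).trans_le (Metric.infDist_le_dist_of_mem hy)

lemma Incomp.sq_lt_sum_sq_compl (hx : x ∈ Incomp n δ ρ) (hρ : 0 ≤ ρ) {J : Finset (Fin n)}
    (hJ : (#J : ℝ) ≤ δ * n) : ρ ^ 2 < ∑ k ∈ Jᶜ, x k ^ 2 := by
  rw [← norm_projCoord_sq, ← sub_projCoord]
  exact pow_lt_pow_left₀ (Incomp.lt_norm_sub hx (projCoord_mem_sparseVecs hJ x)) hρ two_ne_zero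

lemma Incomp.lt_card_filter_abs_mem_Icc (hx : x ∈ Incomp n δ ρ) (hδ : 0 < δ) (hρ : 0 ≤ ρ)
    (hn : 0 < n) : ρ ^ 2 * δ * n / 2 < #{k | |x k| ∈ Icc (ρ / √(2 * n)) (1 / √(δ * n))} := by
  set a := 1 / √(δ * n)
  set b := ρ / √(2 * n)
  have hδn : 0 < δ * n := by positivity
  have ha2 : a ^ 2 = 1 / (δ * n) := by rw [div_pow, one_pow, sq_sqrt hδn.le]
  have hb2 : b ^ 2 = ρ ^ 2 / (2 * n) := by rw [div_pow, sq_sqrt (by positivity)]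
  have hnorm : ∑ k, x k ^ 2 = 1 := by rw [← EuclideanSpace.real_norm_sq_eq, hx.1, one_pow]
  set T : Finset (Fin n) := {k | a < |x k|}
  have hT : (#T : ℝ) ≤ δ * n := by
    have h : #T * a ^ 2 ≤ 1 := hnorm ▸ card_filter_lt_abs_mul_sq_le_sum_sq (by positivity)
    rwa [ha2, mul_one_div, div_le_one hδn] at h
  have hmass :
      ρ ^ 2 < ∑ k with |x k| ∈ Icc b a, x k ^ 2 + ∑ k with |x k| ≤ a ∧ |x k| < b, x k ^ 2 := by
    have hTc : Tᶜ = ({k | |x k| ≤ a} : Finset (Fin n)) := by ext k; simp [T]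
    have h := Incomp.sq_lt_sum_sq_compl hx hρ hT
    rw [hTc, ← sum_filter_add_sum_filter_not _ (fun k => b ≤ |x k|), filter_filter,
      filter_filter] at h
    convert h using 3
    · exact filter_congr fun _ _ => and_comm
    · exact filter_congr fun _ _ => by rw [not_le]
  have htiny : ∑ k with |x k| ≤ a ∧ |x k| < b, x k ^ 2 ≤ ρ ^ 2 / 2 :=
    calc _ ≤ #({k | |x k| ≤ a ∧ |x k| < b} : Finset (Fin n)) * b ^ 2 :=
          sum_sq_le_card_mul_sq fun k hk => (mem_filter.mp hk).2.2.le
      _ ≤ n * b ^ 2 := by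
          gcongr
          exact_mod_cast (card_filter_le _ _).trans_eq (card_fin n)
      _ = ρ ^ 2 / 2 := by rw [hb2]; field_simp
  have hspread : ∑ k with |x k| ∈ Icc b a, x k ^ 2 ≤ #{k | |x k| ∈ Icc b a} / (δ * n) := by
    rw [div_eq_mul_one_div, ← ha2]
    exact sum_sq_le_card_mul_sq fun k hk => (mem_filter.mp hk).2.2
  have hcard : ρ ^ 2 / 2 < #{k | |x k| ∈ Icc b a} / (δ * n) := by linarith
  rw [lt_div_iff₀ hδn] at hcard
  linarith

end Incompressible

section Spread

variable {n d : ℕ} {J : Finset (Fin n)} {x : EuclideanSpace ℝ (Fin n)} {a b : ℝ}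

lemma sqrt_mul_le_norm_projCoord (hJ : #J = d) (hb : 0 ≤ b) (hx : ∀ k ∈ J, b ≤ |x k|) :
    √d * b ≤ ‖projCoord J x‖ := by
  rw [← sqrt_sq hb, ← sqrt_mul (Nat.cast_nonneg d), ← sqrt_sq (norm_nonneg _),
    norm_projCoord_sq, ← hJ]
  exact sqrt_le_sqrt (card_mul_sq_le_sum_sq hb hx)

lemma norm_projCoord_le_sqrt_mul (hJ : #J = d) (ha : 0 ≤ a) (hx : ∀ k ∈ J, |x k| ≤ a) :
    ‖projCoord J x‖ ≤ √d * a := by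
  rw [← sqrt_sq ha, ← sqrt_mul (Nat.cast_nonneg d), ← sqrt_sq (norm_nonneg _),
    norm_projCoord_sq, ← hJ]
  exact sqrt_le_sqrt (sum_sq_le_card_mul_sq hx)

lemma inv_norm_smul_projCoord_mem_spreadSet (hJ : #J = d) (hd : 0 < d) (hb : 0 < b)
    (hx : ∀ k ∈ J, |x k| ∈ Icc b a) :
    ‖projCoord J x‖⁻¹ • projCoord J x ∈ spreadSet n d J (b / a) (a / b) := by
  have hlow := sqrt_mul_le_norm_projCoord hJ hb.le fun k hk => (hx k hk).1
  obtain ⟨k₀, hk₀⟩ := card_pos.mp (hJ ▸ hd)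
  have ha : 0 < a := hb.trans_le ((hx k₀ hk₀).1.trans (hx k₀ hk₀).2)
  have hhigh := norm_projCoord_le_sqrt_mul hJ ha.le fun k hk => (hx k hk).2
  have hN : 0 < ‖projCoord J x‖ := lt_of_lt_of_le (by positivity) hlow
  refine ⟨by rw [norm_smul, norm_inv, norm_norm, inv_mul_cancel₀ hN.ne'], fun k hk => ?_,
    fun k hk => ?_⟩
  · simp [projCoord_apply, hk]
  · simp only [PiLp.smul_apply, projCoord_apply, if_pos hk, smul_eq_mul, ← div_eq_inv_mul,
      abs_div, abs_norm, div_div, mul_comm _ √(d : ℝ)]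
    constructor
    · calc b / (√d * a) ≤ b / ‖projCoord J x‖ := by gcongr
        _ ≤ |x k| / ‖projCoord J x‖ := by gcongr; exact (hx k hk).1
    · calc |x k| / ‖projCoord J x‖ ≤ a / ‖projCoord J x‖ := by gcongr; exact (hx k hk).2
        _ ≤ a / (√d * b) := by gcongr

end Spread

lemma div_two_mul_exp_add_lt {t : ℝ} {d m : ℕ} (ht : 0 < t) (hd : (d : ℝ) ≤ t / 4)
    (hm : t / 2 < m) : t / (2 * exp 1) + d < m + 1 := by
  have : t / (2 * exp 1) < t / 4 := by
    gcongr
    linarith [exp_one_gt_d9]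
  linarith

lemma pow_mul_choose_lt_choose {c : ℝ} {n m d : ℕ} (hd : 0 < d) (hc : 0 ≤ c)
    (h : c * n + d < m + 1) : c ^ d * n.choose d < m.choose d := by
  have hdm : d ≤ m + 1 := by
    have := mul_nonneg hc n.cast_nonneg
    exact_mod_cast (by linarith : (d : ℝ) ≤ m + 1)
  calc c ^ d * n.choose d ≤ c ^ d * (n ^ d / d.factorial) := by
        gcongr; exact Nat.choose_le_pow_div d n
    _ = (c * n) ^ d / d.factorial := by rw [mul_pow, mul_div_assoc]
    _ < ((m + 1 - d : ℕ) : ℝ) ^ d / d.factorial := by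
        gcongr
        rw [Nat.cast_sub hdm]; push_cast; linarith
    _ ≤ m.choose d := Nat.pow_le_choose d m

/-- **Total spread.** For `x ∈ Incomp(δ,ρ)` and a uniformly random `d`-element subset `J`
of `{1,…,n}`, `d ≤ ρ²δn/4`, with probability `> c₀^d = (ρ²δ/2e)^d` over `J` one has both
`P_J x / ‖P_J x‖₂ ∈ Spread_J` (with `K₁ = ρ√(δ/2)`, `K₂ = 1/K₁`) and
`ρ√d/√(2n) ≤ ‖P_J x‖₂ ≤ √d/√(δn)`. -/
theorem total_spread (δ ρ : ℝ) (hδ : δ ∈ Set.Ioo (0 : ℝ) 1) (hρ : ρ ∈ Set.Ioo (0 : ℝ) 1)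
    (n d : ℕ) (hn : 0 < n) (hd : 0 < d) (hdn : (d : ℝ) ≤ ρ ^ 2 * δ * n / 4)
    (x : EuclideanSpace ℝ (Fin n)) (hx : x ∈ Incomp n δ ρ) :
    (ρ ^ 2 * δ / (2 * Real.exp 1)) ^ d * (n.choose d : ℝ) <
      ({J : Finset (Fin n) | J.card = d ∧
          ‖projCoord J x‖⁻¹ • projCoord J x
            ∈ spreadSet n d J (ρ * Real.sqrt (δ / 2)) (ρ * Real.sqrt (δ / 2))⁻¹ ∧
          ρ * Real.sqrt d / Real.sqrt (2 * n) ≤ ‖projCoord J x‖ ∧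
          ‖projCoord J x‖ ≤ Real.sqrt d / Real.sqrt (δ * n)}.ncard : ℝ) := by
  obtain ⟨hδ0, -⟩ := hδ
  obtain ⟨hρ0, -⟩ := hρ
  set σ : Finset (Fin n) := {k | |x k| ∈ Icc (ρ / √(2 * n)) (1 / √(δ * n))}
  have hσ : ρ ^ 2 * δ * n / 2 < #σ := Incomp.lt_card_filter_abs_mem_Icc hx hδ0 hρ0.le hn
  have hK : ρ / √(2 * n) / (1 / √(δ * n)) = ρ * √(δ / 2) := by
    rw [div_div_eq_mul_div, div_one, div_mul_eq_mul_div, mul_div_assoc, ← sqrt_div (by positivity)]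
    congr 2
    field_simp
  refine (pow_mul_choose_lt_choose (m := #σ) hd (by positivity) ?_).trans_le ?_
  · rw [div_mul_eq_mul_div]
    exact div_two_mul_exp_add_lt (by positivity) hdn hσ
  rw [← card_powersetCard, ← ncard_coe_finset]
  refine Nat.cast_le.mpr (Set.ncard_le_ncard (fun J hJ => ?_) (Set.toFinite _))
  obtain ⟨hJσ, hJd⟩ := mem_powersetCard.mp hJ
  have hxJ : ∀ k ∈ J, |x k| ∈ Icc (ρ / √(2 * n)) (1 / √(δ * n)) :=
    fun k hk => (mem_filter.mp (hJσ hk)).2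
  refine ⟨hJd, ?_, ?_, ?_⟩
  · rw [← hK, inv_div]
    exact inv_norm_smul_projCoord_mem_spreadSet hJd hd (by positivity) hxJ
  · calc ρ * √d / √(2 * n) = √d * (ρ / √(2 * n)) := by ring
      _ ≤ ‖projCoord J x‖ :=
        sqrt_mul_le_norm_projCoord hJd (by positivity) fun k hk => (hxJ k hk).1
  · calc ‖projCoord J x‖ ≤ √d * (1 / √(δ * n)) :=
        norm_projCoord_le_sqrt_mul hJd (by positivity) fun k hk => (hxJ k hk).2
      _ = √d / √(δ * n) := by ring
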